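/- arXiv:math/9607204 — 2 statements merged into one kernel-verified Lean document; each statement's English description precedes it below -/
import Mathlib

section
/- John–Nirenberg inequality (normalized form): let f : ℝ → ℝ be locally integrable and suppose that mo(f,J) ≤ 1 for every bounded interval J of positive length. Then for every bounded interval I of positive length and every λ > 0, the Lebesgue measure of {x ∈ I : |f(x) − A(f,I)| > λ} is at most 2^{−(λ−1)/4} · |I|. -/
/-!
Let `I = [a, b)` and `g = |f - A(f,I)|`, so that `A(g,I) ≤ 1`. The maximal dyadic subintervals
`Q` of `I` with `A(g,Q) > 2` (Calderón–Zygmund decomposition) cover `{g > 2}` up to a null set,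
by Lebesgue differentiation; they have total length at most `|I|/2`, and
`|A(f,Q) - A(f,I)| ≤ A(g,Q) ≤ 4` because their dyadic parents have `A(g,·) ≤ 2`. Hence
`{x ∈ I | λ + 4 < g x}` lies, up to a null set, in the union of the sets
`{x ∈ Q | λ < |f x - A(f,Q)|}`, so each increase of `λ` by `4` halves the bound on their
relative measure. The induction starts from Chebyshev's inequality
`|{x ∈ I | λ < g x}| ≤ |I| / λ` for `0 < λ ≤ 5`, where `λ⁻¹ ≤ 2^(-(λ-1)/4)` by Bernoulli's
inequality.
-/

open MeasureTheory Set

/-- The average of `f` over a set `I`: `A(f,I) = (1/|I|) ∫_I f`. -/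
noncomputable def intAvg (f : ℝ → ℝ) (I : Set ℝ) : ℝ :=
  (∫ y in I, f y) / (volume I).toReal

/-- The mean oscillation of `f` over `I`: `mo(f,I) = (1/|I|) ∫_I |f - A(f,I)|`. -/
noncomputable def meanOsc (f : ℝ → ℝ) (I : Set ℝ) : ℝ :=
  (∫ x in I, |f x - intAvg f I|) / (volume I).toReal

/-- `I` is a bounded interval of positive length in `ℝ`. -/
def IsBddInterval (I : Set ℝ) : Prop :=
  ∃ a b : ℝ, a < b ∧ Set.Ioo a b ⊆ I ∧ I ⊆ Set.Icc a b

open Filter Topology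
open scoped ENNReal

lemma MeasureTheory.LocallyIntegrable.integrableOn_Ico {f : ℝ → ℝ} (hf : LocallyIntegrable f)
    (c d : ℝ) : IntegrableOn f (Ico c d) :=
  (hf.integrableOn_isCompact isCompact_Icc).mono_set Ico_subset_Icc_self

lemma MeasureTheory.LocallyIntegrable.abs_sub_const {f : ℝ → ℝ} (hf : LocallyIntegrable f)
    (c : ℝ) : LocallyIntegrable (fun x => |f x - c|) :=
  (hf.sub (locallyIntegrable_const c)).mono
    (hf.aestronglyMeasurable.sub aestronglyMeasurable_const).norm
    (Eventually.of_forall fun x => by simp)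

lemma inv_le_two_rpow_neg_sub_one_div_four {t : ℝ} (h1 : 1 ≤ t) (h5 : t ≤ 5) :
    t⁻¹ ≤ 2 ^ (-(t - 1) / 4) := by
  have hbernoulli : (2 : ℝ) ^ ((t - 1) / 4) ≤ 1 + (t - 1) / 4 * 1 := by
    simpa [one_add_one_eq_two] using
      rpow_one_add_le_one_add_mul_self (s := 1) (by norm_num) (p := (t - 1) / 4)
        (by linarith) (by linarith)
  rw [neg_div, Real.rpow_neg zero_le_two]
  exact inv_anti₀ (by positivity) (by linarith)

lemma isBddInterval_Ico {c d : ℝ} (h : c < d) : IsBddInterval (Ico c d) :=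
  ⟨c, d, h, Ioo_subset_Ico_self, Ico_subset_Icc_self⟩

lemma IsBddInterval.exists_ae_eq_Ico {I : Set ℝ} (hI : IsBddInterval I) :
    ∃ a b, a < b ∧ I =ᵐ[volume] Ico a b := by
  obtain ⟨a, b, hab, hIoo, hIcc⟩ := hI
  exact ⟨a, b, hab, (hIcc.eventuallyLE.trans Ico_ae_eq_Icc.symm.le).antisymm
    (Ioo_ae_eq_Ico.symm.le.trans hIoo.eventuallyLE)⟩

section Average

variable {f : ℝ → ℝ} {s t : Set ℝ}

lemma intAvg_eq_setAverage (f : ℝ → ℝ) (s : Set ℝ) : intAvg f s = ⨍ x in s, f x := by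
  rw [intAvg, setAverage_eq, measureReal_def, smul_eq_mul, div_eq_inv_mul]

lemma intAvg_congr_set (h : s =ᵐ[volume] t) : intAvg f s = intAvg f t := by
  rw [intAvg, intAvg, setIntegral_congr_set h, measure_congr h]

lemma abs_intAvg_sub_le (hf : IntegrableOn f s) (hs : 0 < (volume s).toReal) (K : ℝ) :
    |intAvg f s - K| ≤ intAvg (fun x => |f x - K|) s := by
  have hs_top : volume s ≠ ⊤ := fun h => by simp [h] at hs
  have hsub : intAvg f s - K = (∫ x in s, (f x - K)) / (volume s).toReal := by
    rw [integral_sub hf (integrableOn_const hs_top), setIntegral_const, measureReal_def,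
      smul_eq_mul, intAvg]
    field_simp
  rw [hsub, intAvg, abs_div, abs_of_pos hs]
  gcongr
  exact abs_integral_le_integral_abs

end Average

noncomputable section Dyadic

variable {a b x : ℝ} {n m j k : ℕ}

def dyadicPt (a b : ℝ) (n j : ℕ) : ℝ := a + (b - a) * j / 2 ^ n

def dyadicIco (a b : ℝ) (n j : ℕ) : Set ℝ := Ico (dyadicPt a b n j) (dyadicPt a b n (j + 1))

def dyadicIndex (a b : ℝ) (n : ℕ) (x : ℝ) : ℕ := ⌊(x - a) * 2 ^ n / (b - a)⌋₊

lemma dyadicPt_succ : dyadicPt a b n (j + 1) = dyadicPt a b n j + (b - a) / 2 ^ n := by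
  simp only [dyadicPt]
  push_cast
  ring

lemma dyadicPt_lt_succ (hab : a < b) : dyadicPt a b n j < dyadicPt a b n (j + 1) := by
  have := sub_pos.2 hab
  rw [dyadicPt_succ]
  linarith [show 0 < (b - a) / 2 ^ n by positivity]

lemma volume_dyadicIco : volume (dyadicIco a b n j) = ENNReal.ofReal ((b - a) / 2 ^ n) := by
  rw [dyadicIco, Real.volume_Ico, dyadicPt_succ, add_sub_cancel_left]

lemma toReal_volume_dyadicIco (hab : a ≤ b) :
    (volume (dyadicIco a b n j)).toReal = (b - a) / 2 ^ n := by
  rw [volume_dyadicIco, ENNReal.toReal_ofReal (by have := sub_nonneg.2 hab; positivity)]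

lemma dyadicIco_zero_zero : dyadicIco a b 0 0 = Ico a b := by
  simp [dyadicIco, dyadicPt]

lemma le_of_mem_dyadicIco (hab : a ≤ b) (hx : x ∈ dyadicIco a b n j) : a ≤ x :=
  le_trans (le_add_of_nonneg_right (by have := sub_nonneg.2 hab; positivity)) hx.1

lemma mem_dyadicIco_iff (hab : a < b) (hx : a ≤ x) :
    x ∈ dyadicIco a b n j ↔ dyadicIndex a b n x = j := by
  have hba : 0 < b - a := sub_pos.2 hab
  rw [dyadicIndex, Nat.floor_eq_iff (by have := sub_nonneg.2 hx; positivity), dyadicIco, mem_Ico,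
    dyadicPt, dyadicPt, le_div_iff₀ hba, div_lt_iff₀ hba, ← le_sub_iff_add_le',
    ← sub_lt_iff_lt_add', div_le_iff₀ (by positivity), lt_div_iff₀ (by positivity)]
  push_cast
  constructor <;> rintro ⟨h1, h2⟩ <;> constructor <;> linarith

lemma mem_dyadicIco_dyadicIndex (hab : a < b) (hx : a ≤ x) :
    x ∈ dyadicIco a b n (dyadicIndex a b n x) :=
  (mem_dyadicIco_iff hab hx).2 rfl

lemma dyadicIndex_div_two_pow (hmn : m ≤ n) (x : ℝ) :
    dyadicIndex a b n x / 2 ^ (n - m) = dyadicIndex a b m x := by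
  rw [dyadicIndex, dyadicIndex, ← Nat.floor_div_natCast]
  congr 1
  obtain ⟨k, rfl⟩ := Nat.exists_eq_add_of_le hmn
  push_cast
  rw [Nat.add_sub_cancel_left, pow_add]
  field_simp

lemma dyadicIco_subset_dyadicIco_div (hab : a < b) (hmn : m ≤ n) :
    dyadicIco a b n k ⊆ dyadicIco a b m (k / 2 ^ (n - m)) := by
  intro y hy
  have hay := le_of_mem_dyadicIco hab.le hy
  rw [mem_dyadicIco_iff hab hay] at hy ⊢
  rw [← hy, dyadicIndex_div_two_pow hmn]

lemma dyadicIco_subset_Ico (hab : a < b) (hj : j < 2 ^ n) : dyadicIco a b n j ⊆ Ico a b := by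
  simpa [Nat.div_eq_of_lt hj, dyadicIco_zero_zero] using
    dyadicIco_subset_dyadicIco_div (k := j) hab (Nat.zero_le n)

lemma dyadicIndex_lt_two_pow (hab : a < b) (hx : x ∈ Ico a b) : dyadicIndex a b n x < 2 ^ n := by
  have h0 : dyadicIndex a b 0 x = 0 := by
    rw [← mem_dyadicIco_iff hab hx.1, dyadicIco_zero_zero]
    exact hx
  rw [← dyadicIndex_div_two_pow (Nat.zero_le n), Nat.sub_zero, Nat.div_eq_zero_iff] at h0
  exact h0.resolve_left (by positivity)

lemma disjoint_dyadicIco (hab : a < b) (hjk : j ≠ k) :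
    Disjoint (dyadicIco a b n j) (dyadicIco a b n k) := by
  refine Set.disjoint_left.2 fun y hyj hyk => hjk ?_
  have hay := le_of_mem_dyadicIco hab.le hyj
  rw [← (mem_dyadicIco_iff hab hay).1 hyj, (mem_dyadicIco_iff hab hay).1 hyk]

/-- The closure of a dyadic interval containing `x` is a closed ball whose center lies within one
radius of `x`, which is the setting of `IsUnifLocDoublingMeasure.ae_tendsto_average`. -/
lemma ae_tendsto_intAvg_dyadicIco {g : ℝ → ℝ} (hg : LocallyIntegrable g) (hab : a < b) :
    ∀ᵐ x, a ≤ x →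
      Tendsto (fun n => intAvg g (dyadicIco a b n (dyadicIndex a b n x))) atTop (𝓝 (g x)) := by
  filter_upwards [IsUnifLocDoublingMeasure.ae_tendsto_average volume hg 1] with x hx hax
  set l : ℕ → ℝ := fun n => dyadicPt a b n (dyadicIndex a b n x)
  set r : ℕ → ℝ := fun n => dyadicPt a b n (dyadicIndex a b n x + 1)
  have hradius : Tendsto (fun n => (r n - l n) / 2) atTop (𝓝[>] 0) := by
    have hlen : ∀ n, (r n - l n) / 2 = (b - a) / 2 * 2⁻¹ ^ n := fun n => by
      simp only [r, l, dyadicPt_succ, inv_pow]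
      ring
    simp only [hlen]
    refine tendsto_nhdsWithin_iff.2 ⟨?_, Eventually.of_forall fun n => ?_⟩
    · simpa using (tendsto_pow_atTop_nhds_zero_of_lt_one (by norm_num : (0 : ℝ) ≤ 2⁻¹)
        (by norm_num)).const_mul ((b - a) / 2)
    · have := sub_pos.2 hab
      exact mem_Ioi.2 (by positivity)
  have hmem : ∀ n, x ∈ Metric.closedBall ((l n + r n) / 2) (1 * ((r n - l n) / 2)) := by
    intro n
    rw [one_mul, ← Real.Icc_eq_closedBall]
    exact Ico_subset_Icc_self (mem_dyadicIco_dyadicIndex hab hax)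
  refine (hx _ _ hradius (Eventually.of_forall hmem)).congr fun n => ?_
  rw [intAvg_eq_setAverage, ← Real.Icc_eq_closedBall, dyadicIco]
  exact setAverage_congr Ico_ae_eq_Icc.symm

end Dyadic

section CalderonZygmund

variable {a b α x : ℝ} {g : ℝ → ℝ} {n : ℕ}

/-- The Calderón–Zygmund cubes of `g` at level `α` in `Ico a b`: the maximal dyadic subintervals
on which the average of `g` exceeds `α`, the pair `(n, j)` standing for `dyadicIco a b n j`. -/
def czCubes (a b : ℝ) (g : ℝ → ℝ) (α : ℝ) : Set (ℕ × ℕ) :=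
  {Q | Q.2 < 2 ^ Q.1 ∧ α < intAvg g (dyadicIco a b Q.1 Q.2) ∧
    ∀ m < Q.1, intAvg g (dyadicIco a b m (Q.2 / 2 ^ (Q.1 - m))) ≤ α}

def czSet (a b : ℝ) (g : ℝ → ℝ) (α : ℝ) : Set ℝ :=
  ⋃ Q ∈ czCubes a b g α, dyadicIco a b Q.1 Q.2

lemma disjoint_of_mem_czCubes (hab : a < b) {P Q : ℕ × ℕ} (hP : P ∈ czCubes a b g α)
    (hQ : Q ∈ czCubes a b g α) (hPQ : P ≠ Q) :
    Disjoint (dyadicIco a b P.1 P.2) (dyadicIco a b Q.1 Q.2) := by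
  wlog hle : P.1 ≤ Q.1 generalizing P Q
  · exact (this hQ hP hPQ.symm (by omega)).symm
  rcases hle.eq_or_lt with heq | hlt
  · obtain ⟨n, j⟩ := P
    obtain ⟨m, k⟩ := Q
    obtain rfl : n = m := heq
    exact disjoint_dyadicIco hab fun h => hPQ (Prod.ext rfl h)
  refine Set.disjoint_left.2 fun y hyP hyQ => ?_
  have hay := le_of_mem_dyadicIco hab.le hyP
  have hanc := dyadicIco_subset_dyadicIco_div hab hlt.le hyQ
  rw [mem_dyadicIco_iff hab hay] at hyP hanc
  have := hQ.2.2 P.1 hlt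
  rw [← hanc, hyP] at this
  exact (hP.2.1.trans_le this).false

lemma pairwise_disjoint_czCubes (hab : a < b) :
    Pairwise (Function.onFun Disjoint fun Q : czCubes a b g α => dyadicIco a b Q.1.1 Q.1.2) :=
  fun P Q hPQ => disjoint_of_mem_czCubes hab P.2 Q.2 (Subtype.coe_injective.ne hPQ)

lemma volume_czSet (hab : a < b) :
    volume (czSet a b g α) = ∑' Q : czCubes a b g α, volume (dyadicIco a b Q.1.1 Q.1.2) := by
  rw [czSet, biUnion_eq_iUnion, measure_iUnion (pairwise_disjoint_czCubes hab)
    fun _ => measurableSet_Ico]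

lemma mem_czSet_of_lt_intAvg (hab : a < b) (hx : x ∈ Ico a b)
    (h : α < intAvg g (dyadicIco a b n (dyadicIndex a b n x))) : x ∈ czSet a b g α := by
  classical
  have hex : ∃ n, α < intAvg g (dyadicIco a b n (dyadicIndex a b n x)) := ⟨n, h⟩
  refine mem_biUnion (x := (Nat.find hex, dyadicIndex a b (Nat.find hex) x))
    ⟨dyadicIndex_lt_two_pow hab hx, Nat.find_spec hex, fun m hm => ?_⟩
    (mem_dyadicIco_dyadicIndex hab hx.1)
  rw [dyadicIndex_div_two_pow hm.le]
  exact not_lt.1 (Nat.find_min hex hm)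

lemma ae_le_of_notMem_czSet (hab : a < b) (hg : LocallyIntegrable g) :
    ∀ᵐ x, x ∈ Ico a b \ czSet a b g α → g x ≤ α := by
  filter_upwards [ae_tendsto_intAvg_dyadicIco hg hab] with x hx ⟨hxI, hxU⟩
  exact le_of_tendsto' (hx hxI.1) fun n => not_lt.1 fun h => hxU (mem_czSet_of_lt_intAvg hab hxI h)

lemma intAvg_le_two_mul_of_mem_czCubes (hab : a < b) (hg : LocallyIntegrable g) (hg0 : 0 ≤ g)
    (hα : intAvg g (Ico a b) ≤ α) {Q : ℕ × ℕ} (hQ : Q ∈ czCubes a b g α) :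
    intAvg g (dyadicIco a b Q.1 Q.2) ≤ 2 * α := by
  obtain ⟨n, j⟩ := Q
  obtain ⟨hj, hlt, hanc⟩ := hQ
  obtain ⟨m, rfl⟩ : ∃ m, n = m + 1 := by
    refine Nat.exists_eq_add_one.2 (Nat.pos_of_ne_zero fun hn => ?_)
    subst hn
    obtain rfl : j = 0 := by simpa using hj
    rw [dyadicIco_zero_zero] at hlt
    exact (hlt.trans_le hα).false
  have hsub := dyadicIco_subset_dyadicIco_div (k := j) hab (Nat.le_succ m)
  have hpar := hanc m m.lt_succ_self
  rw [show m + 1 - m = 1 by omega, pow_one] at hsub hpar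
  have hint : ∫ x in dyadicIco a b (m + 1) j, g x ≤ ∫ x in dyadicIco a b m (j / 2), g x :=
    setIntegral_mono_set (hg.integrableOn_Ico _ _) (Eventually.of_forall hg0) hsub.eventuallyLE
  have hba := sub_pos.2 hab
  rw [intAvg, toReal_volume_dyadicIco hab.le, div_le_iff₀ (by positivity)] at hpar ⊢
  calc _ ≤ _ := hint
    _ ≤ _ := hpar
    _ = _ := by rw [pow_succ]; field_simp

lemma ofReal_mul_volume_czSet_le (hab : a < b) (hg : LocallyIntegrable g) (hg0 : 0 ≤ g) :
    ENNReal.ofReal α * volume (czSet a b g α) ≤ ENNReal.ofReal (∫ x in Ico a b, g x) := by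
  have hcube : ∀ Q : czCubes a b g α, ENNReal.ofReal α * volume (dyadicIco a b Q.1.1 Q.1.2) ≤
      ∫⁻ x in dyadicIco a b Q.1.1 Q.1.2, ENNReal.ofReal (g x) := fun Q => by
    have hba := sub_pos.2 hab
    have hlt := Q.2.2.1
    rw [intAvg, toReal_volume_dyadicIco hab.le, lt_div_iff₀ (by positivity)] at hlt
    rw [volume_dyadicIco, ← ENNReal.ofReal_mul' (by positivity)]
    exact (ENNReal.ofReal_le_ofReal hlt.le).trans_eq
      (ofReal_integral_eq_lintegral_ofReal (hg.integrableOn_Ico _ _) (Eventually.of_forall hg0))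
  calc ENNReal.ofReal α * volume (czSet a b g α)
      = ∑' Q : czCubes a b g α, ENNReal.ofReal α * volume (dyadicIco a b Q.1.1 Q.1.2) := by
        rw [volume_czSet hab, ENNReal.tsum_mul_left]
    _ ≤ ∑' Q : czCubes a b g α, ∫⁻ x in dyadicIco a b Q.1.1 Q.1.2, ENNReal.ofReal (g x) :=
        ENNReal.tsum_le_tsum hcube
    _ = ∫⁻ x in ⋃ Q : czCubes a b g α, dyadicIco a b Q.1.1 Q.1.2, ENNReal.ofReal (g x) :=
        (lintegral_iUnion (fun _ => measurableSet_Ico) (pairwise_disjoint_czCubes hab) _).symm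
    _ ≤ ∫⁻ x in Ico a b, ENNReal.ofReal (g x) :=
        lintegral_mono_set (iUnion_subset fun Q => dyadicIco_subset_Ico hab Q.2.1)
    _ = ENNReal.ofReal (∫ x in Ico a b, g x) :=
        (ofReal_integral_eq_lintegral_ofReal (hg.integrableOn_Ico _ _)
          (Eventually.of_forall hg0)).symm

end CalderonZygmund

def oscSuperlevelSet (f : ℝ → ℝ) (I : Set ℝ) (t : ℝ) : Set ℝ :=
  {x ∈ I | t < |f x - intAvg f I|}

section JohnNirenberg

variable {f : ℝ → ℝ} {I J : Set ℝ} {a b t : ℝ}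

lemma oscSuperlevelSet_ae_eq (h : I =ᵐ[volume] J) (t : ℝ) :
    oscSuperlevelSet f I t =ᵐ[volume] oscSuperlevelSet f J t := by
  rw [oscSuperlevelSet, oscSuperlevelSet, intAvg_congr_set h]
  exact ae_eq_set_inter h (EventuallyEq.refl _ {x | t < |f x - intAvg f J|})

lemma ofReal_mul_volume_oscSuperlevelSet_le (hI : volume I ≠ ⊤) (hfI : IntegrableOn f I)
    (t : ℝ) :
    ENNReal.ofReal t * volume (oscSuperlevelSet f I t) ≤
      ENNReal.ofReal (∫ x in I, |f x - intAvg f I|) := by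
  have hint : IntegrableOn (fun x => |f x - intAvg f I|) I := (hfI.sub (integrableOn_const hI)).abs
  calc ENNReal.ofReal t * volume (oscSuperlevelSet f I t)
      ≤ ENNReal.ofReal t * volume.restrict I
          {x | ENNReal.ofReal t ≤ ENNReal.ofReal |f x - intAvg f I|} := by
        refine mul_le_mul_right ((measure_mono fun x hx => ?_).trans
          (Measure.le_restrict_apply I _)) _
        exact ⟨ENNReal.ofReal_le_ofReal hx.2.le, hx.1⟩
    _ ≤ ∫⁻ x in I, ENNReal.ofReal |f x - intAvg f I| :=
        mul_meas_ge_le_lintegral₀ hint.aemeasurable.ennreal_ofReal _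
    _ = _ := (ofReal_integral_eq_lintegral_ofReal hint
        (Eventually.of_forall fun _ => abs_nonneg _)).symm

lemma setIntegral_abs_sub_intAvg_le (hmo : ∀ J, IsBddInterval J → meanOsc f J ≤ 1)
    (hab : a < b) :
    ∫ x in Ico a b, |f x - intAvg f (Ico a b)| ≤ b - a := by
  have h := hmo _ (isBddInterval_Ico hab)
  rwa [meanOsc, Real.volume_Ico, ENNReal.toReal_ofReal (sub_pos.2 hab).le,
    div_le_one (sub_pos.2 hab)] at h

lemma volume_oscSuperlevelSet_Ico_le_of_le_five (hf : LocallyIntegrable f)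
    (hmo : ∀ J, IsBddInterval J → meanOsc f J ≤ 1) (hab : a < b) (ht0 : 0 < t)
    (ht5 : t ≤ 5) :
    volume (oscSuperlevelSet f (Ico a b) t) ≤
      ENNReal.ofReal (2 ^ (-(t - 1) / 4)) * volume (Ico a b) := by
  rcases le_or_gt t 1 with ht1 | ht1
  · calc volume (oscSuperlevelSet f (Ico a b) t)
        ≤ volume (Ico a b) := measure_mono (sep_subset _ _)
      _ ≤ _ := le_mul_of_one_le_left (by positivity)
          (ENNReal.one_le_ofReal.2 (Real.one_le_rpow one_le_two (by linarith)))
  have hcheb := ofReal_mul_volume_oscSuperlevelSet_le (by simp [Real.volume_Ico])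
    (hf.integrableOn_Ico a b) t
  calc volume (oscSuperlevelSet f (Ico a b) t)
      = ENNReal.ofReal t⁻¹ * (ENNReal.ofReal t * volume (oscSuperlevelSet f (Ico a b) t)) := by
        rw [← mul_assoc, ← ENNReal.ofReal_mul (inv_nonneg.2 ht0.le), inv_mul_cancel₀ ht0.ne',
          ENNReal.ofReal_one, one_mul]
    _ ≤ ENNReal.ofReal t⁻¹ * volume (Ico a b) := by
        gcongr
        rw [Real.volume_Ico]
        exact hcheb.trans (ENNReal.ofReal_le_ofReal (setIntegral_abs_sub_intAvg_le hmo hab))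
    _ ≤ _ := by
        gcongr
        exact inv_le_two_rpow_neg_sub_one_div_four ht1.le ht5

lemma abs_intAvg_dyadicIco_sub_le_four (hf : LocallyIntegrable f)
    (hmo : ∀ J, IsBddInterval J → meanOsc f J ≤ 1) (hab : a < b) {Q : ℕ × ℕ}
    (hQ : Q ∈ czCubes a b (fun x => |f x - intAvg f (Ico a b)|) 2) :
    |intAvg f (dyadicIco a b Q.1 Q.2) - intAvg f (Ico a b)| ≤ 4 := by
  have hba := sub_pos.2 hab
  calc |intAvg f (dyadicIco a b Q.1 Q.2) - intAvg f (Ico a b)|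
      ≤ intAvg (fun x => |f x - intAvg f (Ico a b)|) (dyadicIco a b Q.1 Q.2) :=
        abs_intAvg_sub_le (s := dyadicIco a b Q.1 Q.2) (hf.integrableOn_Ico _ _)
          (by rw [toReal_volume_dyadicIco hab.le]; positivity) _
    _ ≤ 2 * 2 := intAvg_le_two_mul_of_mem_czCubes hab (hf.abs_sub_const _)
          (fun _ => abs_nonneg _) ((hmo _ (isBddInterval_Ico hab)).trans one_le_two) hQ
    _ = 4 := by norm_num

lemma volume_czSet_le_half (hf : LocallyIntegrable f)
    (hmo : ∀ J, IsBddInterval J → meanOsc f J ≤ 1) (hab : a < b) :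
    volume (czSet a b (fun x => |f x - intAvg f (Ico a b)|) 2) ≤ volume (Ico a b) / 2 := by
  rw [ENNReal.le_div_iff_mul_le (by simp) (by simp), mul_comm, Real.volume_Ico]
  have h := ofReal_mul_volume_czSet_le (α := 2) hab (hf.abs_sub_const (intAvg f (Ico a b)))
    (fun _ => abs_nonneg _)
  rw [ENNReal.ofReal_ofNat] at h
  exact h.trans (ENNReal.ofReal_le_ofReal (setIntegral_abs_sub_intAvg_le hmo hab))

lemma volume_oscSuperlevelSet_Ico_add_four_le (hf : LocallyIntegrable f)
    (hmo : ∀ J, IsBddInterval J → meanOsc f J ≤ 1) (ht : 0 ≤ t) {C : ℝ≥0∞}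
    (hC : ∀ c d, c < d → volume (oscSuperlevelSet f (Ico c d) t) ≤ C * volume (Ico c d))
    (hab : a < b) :
    volume (oscSuperlevelSet f (Ico a b) (t + 4)) ≤ C / 2 * volume (Ico a b) := by
  set g : ℝ → ℝ := fun x => |f x - intAvg f (Ico a b)|
  set N := Ico a b \ czSet a b g 2 ∩ {x | 2 < g x}
  have hN : volume N = 0 := by
    rw [measure_eq_zero_iff_ae_notMem]
    filter_upwards [ae_le_of_notMem_czSet hab (hf.abs_sub_const (intAvg f (Ico a b)))]
      with x hx ⟨hxU, hgx⟩
    exact (lt_of_lt_of_le hgx (hx hxU)).false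
  have hcover : oscSuperlevelSet f (Ico a b) (t + 4) ⊆
      N ∪ ⋃ Q : czCubes a b g 2, oscSuperlevelSet f (dyadicIco a b Q.1.1 Q.1.2) t := by
    rintro x ⟨hxI, hx⟩
    by_cases hxU : x ∈ czSet a b g 2
    · obtain ⟨Q, hQ, hxQ⟩ := mem_iUnion₂.1 hxU
      refine Or.inr (mem_iUnion.2 ⟨⟨Q, hQ⟩, hxQ, ?_⟩)
      have := abs_sub_le (f x) (intAvg f (dyadicIco a b Q.1 Q.2)) (intAvg f (Ico a b))
      linarith [abs_intAvg_dyadicIco_sub_le_four hf hmo hab hQ]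
    · exact Or.inl ⟨⟨hxI, hxU⟩, show 2 < g x by linarith⟩
  calc volume (oscSuperlevelSet f (Ico a b) (t + 4))
      ≤ volume N +
          volume (⋃ Q : czCubes a b g 2, oscSuperlevelSet f (dyadicIco a b Q.1.1 Q.1.2) t) :=
        (measure_mono hcover).trans (measure_union_le _ _)
    _ ≤ ∑' Q : czCubes a b g 2, volume (oscSuperlevelSet f (dyadicIco a b Q.1.1 Q.1.2) t) := by
        rw [hN, zero_add]
        exact measure_iUnion_le _
    _ ≤ ∑' Q : czCubes a b g 2, C * volume (dyadicIco a b Q.1.1 Q.1.2) :=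
        ENNReal.tsum_le_tsum fun Q => hC _ _ (dyadicPt_lt_succ hab)
    _ = C * volume (czSet a b g 2) := by rw [ENNReal.tsum_mul_left, volume_czSet hab]
    _ ≤ C * (volume (Ico a b) / 2) := by gcongr; exact volume_czSet_le_half hf hmo hab
    _ = C / 2 * volume (Ico a b) := by rw [mul_div_assoc', ENNReal.mul_div_right_comm]

theorem volume_oscSuperlevelSet_Ico_le (hf : LocallyIntegrable f)
    (hmo : ∀ J, IsBddInterval J → meanOsc f J ≤ 1) (ht : 0 < t) (hab : a < b) :
    volume (oscSuperlevelSet f (Ico a b) t) ≤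
      ENNReal.ofReal (2 ^ (-(t - 1) / 4)) * volume (Ico a b) := by
  obtain ⟨N, hN⟩ : ∃ N : ℕ, t ≤ 4 * N + 5 :=
    ⟨⌈t⌉₊, by linarith [Nat.le_ceil t, (Nat.cast_nonneg ⌈t⌉₊ : (0 : ℝ) ≤ _)]⟩
  induction N generalizing t a b with
  | zero => exact volume_oscSuperlevelSet_Ico_le_of_le_five hf hmo hab ht (by simpa using hN)
  | succ N ih =>
    rcases le_or_gt t (4 * N + 5) with htN | htN
    · exact ih ht hab htN
    have hN0 : (0 : ℝ) ≤ N := N.cast_nonneg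
    have hstep := volume_oscSuperlevelSet_Ico_add_four_le hf hmo (t := t - 4) (by linarith)
      (fun c d hcd => ih (by linarith) hcd (by push_cast at hN; linarith)) hab
    rw [sub_add_cancel] at hstep
    have hexp : (2 : ℝ) ^ (-(t - 4 - 1) / 4) = 2 ^ (-(t - 1) / 4) * 2 := by
      rw [← Real.rpow_add_one two_ne_zero]; ring_nf
    rwa [hexp, ENNReal.ofReal_mul (by positivity), ENNReal.ofReal_ofNat,
      ENNReal.mul_div_cancel_right two_ne_zero ENNReal.ofNat_ne_top] at hstep

end JohnNirenberg

/-- The John–Nirenberg inequality in normalized form. -/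
theorem john_nirenberg (f : ℝ → ℝ) (hf : LocallyIntegrable f)
    (hmo : ∀ J : Set ℝ, IsBddInterval J → meanOsc f J ≤ 1) :
    ∀ I : Set ℝ, IsBddInterval I → ∀ lam : ℝ, 0 < lam →
      (volume {x ∈ I | lam < |f x - intAvg f I|}).toReal ≤
        (2 : ℝ) ^ (-(lam - 1) / 4) * (volume I).toReal := by
  intro I hI lam hlam
  obtain ⟨a, b, hab, hIab⟩ := hI.exists_ae_eq_Ico
  have hbound := volume_oscSuperlevelSet_Ico_le hf hmo hlam hab
  rw [← measure_congr hIab, ← measure_congr (oscSuperlevelSet_ae_eq hIab lam)] at hbound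
  refine (ENNReal.toReal_mono ?_ hbound).trans_eq ?_
  · exact ENNReal.mul_ne_top ENNReal.ofReal_ne_top (by simp [measure_congr hIab, Real.volume_Ico])
  · rw [ENNReal.toReal_mul, ENNReal.toReal_ofReal (by positivity)]
end

section
/- Discrete John–Nirenberg inequality with constants independent of N: let N be a natural number and f : {0, 1, …, 2^N − 1} → ℝ. Call a set I ⊆ {0, …, 2^N − 1} a dyadic block if I = {k·2^j, k·2^j + 1, …, (k+1)·2^j − 1} for some 0 ≤ j ≤ N and 0 ≤ k < 2^{N−j}; for a dyadic block I write A(f,I) = (1/#I) Σ_{x∈I} f(x). Suppose that (1/#I) Σ_{x∈I} |f(x) − A(f,I)| ≤ 1 for every dyadic block I. Then for every dyadic block I and every λ > 0, #{x ∈ I : |f(x) − A(f,I)| > λ} ≤ 2^{−(λ−1)/4} · #I. -/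
open Finset

/-- The dyadic block `{k·2^j, …, (k+1)·2^j − 1}` inside `{0, …, 2^N − 1}`. -/
def dyadicBlock (j k : ℕ) : Finset ℕ :=
  Finset.Ico (k * 2 ^ j) ((k + 1) * 2 ^ j)

/-- The average of `f` over a finite set `I`. -/
noncomputable def finAvg (f : ℕ → ℝ) (I : Finset ℕ) : ℝ :=
  (∑ x ∈ I, f x) / I.card

lemma card_dyadicBlock (j k : ℕ) : (dyadicBlock j k).card = 2 ^ j := by
  rw [dyadicBlock, Nat.card_Ico, add_mul, one_mul, Nat.add_sub_cancel_left]

lemma dyadicBlock_nonempty (j k : ℕ) : (dyadicBlock j k).Nonempty := by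
  rw [← Finset.card_pos, card_dyadicBlock]; positivity

lemma mem_dyadicBlock {j k x : ℕ} : x ∈ dyadicBlock j k ↔ x / 2 ^ j = k := by
  rw [dyadicBlock, Finset.mem_Ico]
  constructor
  · rintro ⟨h1, h2⟩
    exact Nat.div_eq_of_lt_le h1 h2
  · rintro rfl
    refine ⟨Nat.div_mul_le_self x _, ?_⟩
    exact (Nat.div_lt_iff_lt_mul (by positivity)).1 (Nat.lt_succ_self _)

lemma ancestor_div {j m x : ℕ} (h : j ≤ m) : x / 2 ^ j / 2 ^ (m - j) = x / 2 ^ m := by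
  rw [Nat.div_div_eq_div_mul, ← pow_add, Nat.add_sub_cancel' h]

lemma subset_ancestor {j m k : ℕ} (h : j ≤ m) :
    dyadicBlock j k ⊆ dyadicBlock m (k / 2 ^ (m - j)) := by
  intro x hx
  rw [mem_dyadicBlock] at hx ⊢
  rw [← hx, ancestor_div h]

lemma self_mem_dyadicBlock (j k : ℕ) : k * 2 ^ j ∈ dyadicBlock j k :=
  mem_dyadicBlock.2 (Nat.mul_div_cancel _ (by positivity))

lemma eq_ancestor {j m k l x : ℕ} (h : j ≤ m) (hx : x ∈ dyadicBlock j k)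
    (hx' : x ∈ dyadicBlock m l) : k / 2 ^ (m - j) = l := by
  rw [mem_dyadicBlock] at hx hx'
  rw [← hx, ancestor_div h, hx']

lemma disjoint_dyadicBlock {j m k l : ℕ} (h : j ≤ m) (hne : k / 2 ^ (m - j) ≠ l) :
    Disjoint (dyadicBlock j k) (dyadicBlock m l) := by
  rw [Finset.disjoint_left]
  intro x hx hx'
  exact hne (eq_ancestor h hx hx')

lemma dyadicBlock_zero (x : ℕ) : dyadicBlock 0 x = {x} := by
  simp [dyadicBlock]

lemma finAvg_dyadicBlock_zero (f : ℕ → ℝ) (x : ℕ) :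
    finAvg f (dyadicBlock 0 x) = f x := by
  simp [dyadicBlock_zero, finAvg]

lemma avg_diff_le (f : ℕ → ℝ) (c : ℝ) {J P : Finset ℕ} (hJP : J ⊆ P) :
    |finAvg f J - c| * J.card ≤ ∑ x ∈ P, |f x - c| := by
  rcases J.eq_empty_or_nonempty with rfl | hne
  · simp [Finset.sum_nonneg (fun x _ => abs_nonneg (f x - c))]
  · have hc : (0 : ℝ) < J.card := by exact_mod_cast Finset.card_pos.2 hne
    have h1 : finAvg f J - c = (∑ x ∈ J, (f x - c)) / J.card := by
      rw [finAvg, Finset.sum_sub_distrib, Finset.sum_const, nsmul_eq_mul, sub_div,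
        mul_div_cancel_left₀ _ (ne_of_gt hc)]
    calc |finAvg f J - c| * J.card = |∑ x ∈ J, (f x - c)| := by
          rw [h1, abs_div, abs_of_pos hc, div_mul_cancel₀ _ (ne_of_gt hc)]
      _ ≤ ∑ x ∈ J, |f x - c| := Finset.abs_sum_le_sum_abs _ _
      _ ≤ ∑ x ∈ P, |f x - c| :=
          Finset.sum_le_sum_of_subset_of_nonneg hJP (fun x _ _ => abs_nonneg _)

lemma two_rpow_le_one_add {s : ℝ} (h0 : 0 ≤ s) (h1 : s ≤ 1) : (2:ℝ) ^ s ≤ 1 + s := by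
  have key := convexOn_exp.2 (Set.mem_univ (0:ℝ)) (Set.mem_univ (Real.log 2))
    (by linarith : (0:ℝ) ≤ 1 - s) h0 (by ring)
  simp only [smul_eq_mul, mul_zero, zero_add, Real.exp_zero,
    Real.exp_log (by norm_num : (0:ℝ) < 2)] at key
  rw [Real.rpow_def_of_pos (by norm_num : (0:ℝ) < 2)]
  calc Real.exp (Real.log 2 * s) = Real.exp (s * Real.log 2) := by ring_nf
    _ ≤ (1 - s) * 1 + s * 2 := key
    _ = 1 + s := by ring

/-- A stopping block inside `dyadicBlock j k`. -/
def Stop (f : ℕ → ℝ) (j k j' k' : ℕ) : Prop :=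
  j' < j ∧ dyadicBlock j' k' ⊆ dyadicBlock j k ∧
    2 < |finAvg f (dyadicBlock j' k') - finAvg f (dyadicBlock j k)|

/-- A maximal stopping block: all strict dyadic ancestors below level `j` have
average within `2` of the big average. -/
def MaxStop (f : ℕ → ℝ) (j k j' k' : ℕ) : Prop :=
  Stop f j k j' k' ∧ ∀ m, j' < m → m < j →
    |finAvg f (dyadicBlock m (k' / 2 ^ (m - j'))) - finAvg f (dyadicBlock j k)| ≤ 2

lemma level_subset {j m k x : ℕ} (hm : m ≤ j) (hx : x ∈ dyadicBlock j k) :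
    dyadicBlock m (x / 2 ^ m) ⊆ dyadicBlock j k := by
  have h := subset_ancestor (k := x / 2 ^ m) hm
  rwa [ancestor_div hm, mem_dyadicBlock.1 hx] at h

lemma exists_maxStop (f : ℕ → ℝ) {j k x : ℕ} (hj : 0 < j) (hx : x ∈ dyadicBlock j k)
    (h2 : 2 < |f x - finAvg f (dyadicBlock j k)|) :
    ∃ j' k', MaxStop f j k j' k' ∧ x ∈ dyadicBlock j' k' := by
  classical
  set T : Finset ℕ := (Finset.range j).filter (fun m => Stop f j k m (x / 2 ^ m)) with hT
  have h0T : 0 ∈ T := by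
    have hx0 : x / 2 ^ 0 = x := by simp
    refine Finset.mem_filter.2 ⟨Finset.mem_range.2 hj, hj, ?_, ?_⟩
    · exact level_subset (Nat.zero_le j) hx
    · rw [hx0, finAvg_dyadicBlock_zero]; exact h2
  have hne : T.Nonempty := ⟨0, h0T⟩
  set j' := T.max' hne with hj'
  have hj'T : j' ∈ T := T.max'_mem hne
  obtain ⟨hj'r, hstop⟩ := Finset.mem_filter.1 hj'T
  refine ⟨j', x / 2 ^ j', ⟨hstop, ?_⟩, mem_dyadicBlock.2 rfl⟩
  intro m hm1 hm2
  rw [ancestor_div (le_of_lt hm1)]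
  by_contra hgt
  push_neg at hgt
  have hmT : m ∈ T := Finset.mem_filter.2
    ⟨Finset.mem_range.2 hm2, hm2, level_subset (le_of_lt hm2) hx, hgt⟩
  exact absurd (T.le_max' m hmT) (by omega)

lemma maxStop_disjoint_aux (f : ℕ → ℝ) {j k j₁ k₁ j₂ k₂ : ℕ} (h12 : j₁ ≤ j₂)
    (hp : MaxStop f j k j₁ k₁) (hq : MaxStop f j k j₂ k₂)
    (hne : (j₁, k₁) ≠ (j₂, k₂)) :
    Disjoint (dyadicBlock j₁ k₁) (dyadicBlock j₂ k₂) := by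
  apply disjoint_dyadicBlock h12
  intro heq
  rcases eq_or_lt_of_le h12 with rfl | hlt
  · simp only [Nat.sub_self, pow_zero, Nat.div_one] at heq
    exact hne (by rw [heq])
  · have h := hp.2 j₂ hlt hq.1.1
    rw [heq] at h
    exact absurd hq.1.2.2 (not_lt.2 h)

lemma maxStop_disjoint (f : ℕ → ℝ) {j k : ℕ} {p q : ℕ × ℕ}
    (hp : MaxStop f j k p.1 p.2) (hq : MaxStop f j k q.1 q.2) (hne : p ≠ q) :
    Disjoint (dyadicBlock p.1 p.2) (dyadicBlock q.1 q.2) := by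
  rcases le_total p.1 q.1 with h | h
  · exact maxStop_disjoint_aux f h hp hq (by simpa using hne)
  · exact (maxStop_disjoint_aux f h hq hp (by simpa using hne.symm)).symm

lemma valid_of_subset {N j k j' k' : ℕ} (hjN : j ≤ N) (hk : k < 2 ^ (N - j))
    (hj' : j' ≤ j) (hsub : dyadicBlock j' k' ⊆ dyadicBlock j k) :
    j' ≤ N ∧ k' < 2 ^ (N - j') := by
  refine ⟨le_trans hj' hjN, ?_⟩
  have hxI := hsub (self_mem_dyadicBlock j' k')
  have h1 : k' * 2 ^ j' < (k + 1) * 2 ^ j := (Finset.mem_Ico.1 hxI).2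
  have h2 : (k + 1) * 2 ^ j ≤ 2 ^ N := by
    calc (k + 1) * 2 ^ j ≤ 2 ^ (N - j) * 2 ^ j := Nat.mul_le_mul_right _ hk
      _ = 2 ^ N := by rw [← pow_add]; congr 1; omega
  have hN : k' * 2 ^ j' < 2 ^ (N - j') * 2 ^ j' := by
    have e : 2 ^ (N - j') * 2 ^ j' = 2 ^ N := by rw [← pow_add]; congr 1; omega
    rw [e]; exact lt_of_lt_of_le h1 h2
  exact Nat.lt_of_mul_lt_mul_right hN

lemma parent_subset {j k j' k' : ℕ} (h : j' < j)
    (hsub : dyadicBlock j' k' ⊆ dyadicBlock j k) :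
    dyadicBlock (j' + 1) (k' / 2) ⊆ dyadicBlock j k := by
  have hk' : k' / 2 ^ (j - j') = k :=
    eq_ancestor (le_of_lt h) (self_mem_dyadicBlock j' k') (hsub (self_mem_dyadicBlock j' k'))
  have hanc := subset_ancestor (j := j' + 1) (m := j) (k := k' / 2) h
  have harith : k' / 2 / 2 ^ (j - (j' + 1)) = k := by
    rw [Nat.div_div_eq_div_mul]
    have e : 2 * 2 ^ (j - (j' + 1)) = 2 ^ (j - j') := by
      rw [← pow_succ']
      congr 1; omega
    rw [e, hk']
  rwa [harith] at hanc

lemma child_subset (j' k' : ℕ) : dyadicBlock j' k' ⊆ dyadicBlock (j' + 1) (k' / 2) := by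
  have h := subset_ancestor (j := j') (m := j' + 1) (k := k') (Nat.le_succ j')
  have e : j' + 1 - j' = 1 := by omega
  rwa [e, pow_one] at h

section Main

variable {N : ℕ} {f : ℕ → ℝ}
variable (hmo : ∀ j k : ℕ, j ≤ N → k < 2 ^ (N - j) →
      (∑ x ∈ dyadicBlock j k, |f x - finAvg f (dyadicBlock j k)|) /
        (dyadicBlock j k).card ≤ 1)
include hmo

lemma osc_sum {j k : ℕ} (hjN : j ≤ N) (hk : k < 2 ^ (N - j)) :
    ∑ x ∈ dyadicBlock j k, |f x - finAvg f (dyadicBlock j k)| ≤ (2:ℝ) ^ j := by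
  have h := hmo j k hjN hk
  have hc : ((dyadicBlock j k).card : ℝ) = 2 ^ j := by
    rw [card_dyadicBlock]; push_cast; ring
  rw [div_le_one (by rw [hc]; positivity)] at h
  rwa [hc] at h

lemma maxStop_avg_bound {j k j' k' : ℕ} (hjN : j ≤ N) (hk : k < 2 ^ (N - j))
    (h : MaxStop f j k j' k') :
    |finAvg f (dyadicBlock j' k') - finAvg f (dyadicBlock j k)| ≤ 4 := by
  obtain ⟨⟨hj', hsub, _⟩, hmax⟩ := h
  have hJP := child_subset j' k'
  have hPI := parent_subset hj' hsub
  have hPvalid := valid_of_subset hjN hk (by omega) hPI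
  have hsumP : ∑ x ∈ dyadicBlock (j' + 1) (k' / 2),
      |f x - finAvg f (dyadicBlock (j' + 1) (k' / 2))| ≤ (2:ℝ) ^ (j' + 1) :=
    osc_sum hmo hPvalid.1 hPvalid.2
  have h1 : |finAvg f (dyadicBlock j' k') - finAvg f (dyadicBlock (j' + 1) (k' / 2))| ≤ 2 := by
    have hd := avg_diff_le f (finAvg f (dyadicBlock (j' + 1) (k' / 2))) hJP
    rw [card_dyadicBlock] at hd
    have hcast : ((2 ^ j' : ℕ) : ℝ) = 2 ^ j' := by push_cast; ring
    rw [hcast] at hd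
    have hpow : (2:ℝ) ^ (j' + 1) = 2 * 2 ^ j' := by ring
    have hpos : (0:ℝ) < 2 ^ j' := by positivity
    nlinarith [le_trans hd hsumP]
  have h2 : |finAvg f (dyadicBlock (j' + 1) (k' / 2)) - finAvg f (dyadicBlock j k)| ≤ 2 := by
    rcases eq_or_lt_of_le (show j' + 1 ≤ j by omega) with heq | hlt
    · have hk2 : k' / 2 = k := by
        have := eq_ancestor (le_of_eq heq) (self_mem_dyadicBlock (j' + 1) (k' / 2))
          (hPI (self_mem_dyadicBlock (j' + 1) (k' / 2)))
        rwa [← heq, Nat.sub_self, pow_zero, Nat.div_one] at this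
      rw [heq, hk2]
      simp
    · have h := hmax (j' + 1) (Nat.lt_succ_self j') hlt
      have e : k' / 2 ^ (j' + 1 - j') = k' / 2 := by
        congr 1
        rw [show j' + 1 - j' = 1 by omega, pow_one]
      rwa [e] at h
  calc |finAvg f (dyadicBlock j' k') - finAvg f (dyadicBlock j k)|
      ≤ |finAvg f (dyadicBlock j' k') - finAvg f (dyadicBlock (j' + 1) (k' / 2))| +
        |finAvg f (dyadicBlock (j' + 1) (k' / 2)) - finAvg f (dyadicBlock j k)| :=
        abs_sub_le _ _ _
    _ ≤ 4 := by linarith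

end Main
/-- Discrete John–Nirenberg inequality on `{0, …, 2^N − 1}` with constants
independent of `N`: if the mean oscillation of `f` over every dyadic block is at
most `1`, then for every dyadic block `I` and every `λ > 0`,
`#{x ∈ I : |f x − A(f,I)| > λ} ≤ 2^{−(λ−1)/4} · #I`. -/
theorem discrete_john_nirenberg (N : ℕ) (f : ℕ → ℝ)
    (hmo : ∀ j k : ℕ, j ≤ N → k < 2 ^ (N - j) →
      (∑ x ∈ dyadicBlock j k, |f x - finAvg f (dyadicBlock j k)|) /
        (dyadicBlock j k).card ≤ 1) :
    ∀ j k : ℕ, j ≤ N → k < 2 ^ (N - j) → ∀ lam : ℝ, 0 < lam →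
      (((dyadicBlock j k).filter
          (fun x => lam < |f x - finAvg f (dyadicBlock j k)|)).card : ℝ) ≤
        (2 : ℝ) ^ (-(lam - 1) / 4) * (dyadicBlock j k).card := by
  intro j
  induction j using Nat.strong_induction_on with
  | _ j IH =>
  intro k hjN hk lam hlam
  have hcard : ((dyadicBlock j k).card : ℝ) = 2 ^ j := by
    rw [card_dyadicBlock]; push_cast; ring
  rw [hcard]
  have hrpos : (0:ℝ) < (2:ℝ) ^ (-(lam - 1) / 4) := Real.rpow_pos_of_pos two_pos _
  by_cases hl5 : lam ≤ 5
  · -- base case: λ ≤ 5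
    have hsum := osc_sum hmo hjN hk
    by_cases hl1 : lam ≤ 1
    · -- trivial case
      have h1 : (1:ℝ) ≤ (2:ℝ) ^ (-(lam - 1) / 4) := by
        rw [show (1:ℝ) = (2:ℝ) ^ (0:ℝ) by simp]
        exact Real.rpow_le_rpow_of_exponent_le one_le_two (by linarith)
      have h2 : ((((dyadicBlock j k).filter
          (fun x => lam < |f x - finAvg f (dyadicBlock j k)|)).card : ℝ)) ≤ 2 ^ j := by
        rw [← hcard]
        exact_mod_cast Finset.card_le_card (Finset.filter_subset _ _)
      nlinarith [pow_pos (show (0:ℝ) < 2 by norm_num) j]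
    · -- Chebyshev case: 1 < λ ≤ 5
      push_neg at hl1
      set C : ℝ := (((dyadicBlock j k).filter
          (fun x => lam < |f x - finAvg f (dyadicBlock j k)|)).card : ℝ) with hC
      have hC0 : (0:ℝ) ≤ C := Nat.cast_nonneg _
      have hCheb : lam * C ≤ (2:ℝ) ^ j := by
        calc lam * C = ∑ _x ∈ (dyadicBlock j k).filter
              (fun x => lam < |f x - finAvg f (dyadicBlock j k)|), lam := by
              rw [Finset.sum_const, nsmul_eq_mul]; ring
          _ ≤ ∑ x ∈ (dyadicBlock j k).filter
              (fun x => lam < |f x - finAvg f (dyadicBlock j k)|),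
                |f x - finAvg f (dyadicBlock j k)| :=
              Finset.sum_le_sum (fun x hx => le_of_lt (Finset.mem_filter.1 hx).2)
          _ ≤ ∑ x ∈ dyadicBlock j k, |f x - finAvg f (dyadicBlock j k)| :=
              Finset.sum_le_sum_of_subset_of_nonneg (Finset.filter_subset _ _)
                (fun x _ _ => abs_nonneg _)
          _ ≤ (2:ℝ) ^ j := hsum
      have hexp : (2:ℝ) ^ ((lam - 1) / 4) ≤ lam := by
        have := two_rpow_le_one_add (s := (lam - 1) / 4) (by linarith) (by linarith)
        linarith
      have hinv : (2:ℝ) ^ (-(lam - 1) / 4) * (2:ℝ) ^ ((lam - 1) / 4) = 1 := by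
        rw [← Real.rpow_add two_pos, show -(lam - 1) / 4 + (lam - 1) / 4 = 0 by ring,
          Real.rpow_zero]
      have h1 : (2:ℝ) ^ ((lam - 1) / 4) * C ≤ (2:ℝ) ^ j := by
        nlinarith [mul_le_mul_of_nonneg_right hexp hC0]
      calc C = (2:ℝ) ^ (-(lam - 1) / 4) * ((2:ℝ) ^ ((lam - 1) / 4) * C) := by
            rw [← mul_assoc, hinv, one_mul]
        _ ≤ (2:ℝ) ^ (-(lam - 1) / 4) * (2:ℝ) ^ j :=
            mul_le_mul_of_nonneg_left h1 (le_of_lt hrpos)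
  · -- Calderón–Zygmund case: λ > 5
    push_neg at hl5
    rcases Nat.eq_zero_or_pos j with rfl | hj0
    · -- j = 0 : singleton block, filter is empty
      have he : (dyadicBlock 0 k).filter
          (fun x => lam < |f x - finAvg f (dyadicBlock 0 k)|) = ∅ := by
        rw [Finset.filter_eq_empty_iff]
        intro x hx
        rw [dyadicBlock_zero, Finset.mem_singleton] at hx
        subst hx
        rw [finAvg_dyadicBlock_zero]
        simp only [sub_self, abs_zero, not_lt]
        linarith
      rw [he]
      simp only [Finset.card_empty, Nat.cast_zero]
      positivity
    · classical
      set M : Finset (ℕ × ℕ) :=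
        ((Finset.range j) ×ˢ (Finset.range (2 ^ N))).filter
          (fun p => MaxStop f j k p.1 p.2) with hM
      have hMmem : ∀ p ∈ M, MaxStop f j k p.1 p.2 := fun p hp => (Finset.mem_filter.1 hp).2
      have hdisj : ∀ p ∈ M, ∀ q ∈ M, p ≠ q →
          Disjoint (dyadicBlock p.1 p.2) (dyadicBlock q.1 q.2) :=
        fun p hp q hq hne => maxStop_disjoint f (hMmem p hp) (hMmem q hq) hne
      -- covering
      have hcover : (dyadicBlock j k).filter
            (fun x => lam < |f x - finAvg f (dyadicBlock j k)|) ⊆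
          M.biUnion (fun p => (dyadicBlock p.1 p.2).filter
            (fun x => lam - 4 < |f x - finAvg f (dyadicBlock p.1 p.2)|)) := by
        intro x hx
        obtain ⟨hxI, hxl⟩ := Finset.mem_filter.1 hx
        obtain ⟨j', k', hms, hxJ⟩ := exists_maxStop f hj0 hxI (by linarith)
        have hk'N : k' < 2 ^ N := by
          have h1 : k' = x / 2 ^ j' := (mem_dyadicBlock.1 hxJ).symm
          have h2 : x < 2 ^ N := by
            have := (Finset.mem_Ico.1 hxI).2
            have h3 : (k + 1) * 2 ^ j ≤ 2 ^ N := by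
              calc (k + 1) * 2 ^ j ≤ 2 ^ (N - j) * 2 ^ j := Nat.mul_le_mul_right _ hk
                _ = 2 ^ N := by rw [← pow_add]; congr 1; omega
            omega
          calc k' = x / 2 ^ j' := h1
            _ ≤ x := Nat.div_le_self _ _
            _ < 2 ^ N := h2
        have hpM : (j', k') ∈ M := by
          rw [hM]
          exact Finset.mem_filter.2
            ⟨Finset.mem_product.2 ⟨Finset.mem_range.2 hms.1.1, Finset.mem_range.2 hk'N⟩, hms⟩
        refine Finset.mem_biUnion.2 ⟨(j', k'), hpM, Finset.mem_filter.2 ⟨hxJ, ?_⟩⟩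
        have h4 := maxStop_avg_bound hmo hjN hk hms
        have htri : |f x - finAvg f (dyadicBlock j k)| ≤
            |f x - finAvg f (dyadicBlock j' k')| +
              |finAvg f (dyadicBlock j' k') - finAvg f (dyadicBlock j k)| :=
          abs_sub_le _ _ _
        simp only at htri h4 ⊢
        linarith
      -- per-block counting from the induction hypothesis
      have hIH : ∀ p ∈ M, (((dyadicBlock p.1 p.2).filter
            (fun x => lam - 4 < |f x - finAvg f (dyadicBlock p.1 p.2)|)).card : ℝ) ≤
          (2:ℝ) ^ (-(lam - 5) / 4) * 2 ^ p.1 := by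
        intro p hp
        have hms := hMmem p hp
        have hp1 : p.1 < j := hms.1.1
        have hv := valid_of_subset hjN hk (le_of_lt hp1) hms.1.2.1
        have h := IH p.1 hp1 p.2 hv.1 hv.2 (lam - 4) (by linarith)
        have hc : ((dyadicBlock p.1 p.2).card : ℝ) = 2 ^ p.1 := by
          rw [card_dyadicBlock]; push_cast; ring
        rw [hc] at h
        have e : -(lam - 4 - 1) / 4 = -(lam - 5) / 4 := by ring
        rwa [e] at h
      -- mass bound
      have hmass : ∑ p ∈ M, (2:ℝ) ^ p.1 * 2 ≤ 2 ^ j := by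
        have hpd : (↑M : Set (ℕ × ℕ)).PairwiseDisjoint
            (fun p : ℕ × ℕ => dyadicBlock p.1 p.2) :=
          fun p hp q hq hne => hdisj p hp q hq hne
        have hsubI : M.biUnion (fun p => dyadicBlock p.1 p.2) ⊆ dyadicBlock j k :=
          Finset.biUnion_subset.2 (fun p hp => (hMmem p hp).1.2.1)
        calc ∑ p ∈ M, (2:ℝ) ^ p.1 * 2
            ≤ ∑ p ∈ M, ∑ x ∈ dyadicBlock p.1 p.2, |f x - finAvg f (dyadicBlock j k)| := by
              apply Finset.sum_le_sum
              intro p hp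
              have hms := hMmem p hp
              have hd := avg_diff_le f (finAvg f (dyadicBlock j k))
                (Finset.Subset.refl (dyadicBlock p.1 p.2))
              rw [card_dyadicBlock] at hd
              have hcast : ((2 ^ p.1 : ℕ) : ℝ) = 2 ^ p.1 := by push_cast; ring
              rw [hcast] at hd
              have h2 := hms.1.2.2
              nlinarith [pow_pos (show (0:ℝ) < 2 by norm_num) p.1]
          _ = ∑ x ∈ M.biUnion (fun p => dyadicBlock p.1 p.2),
                |f x - finAvg f (dyadicBlock j k)| := (Finset.sum_biUnion hpd).symm
          _ ≤ ∑ x ∈ dyadicBlock j k, |f x - finAvg f (dyadicBlock j k)| :=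
              Finset.sum_le_sum_of_subset_of_nonneg hsubI (fun x _ _ => abs_nonneg _)
          _ ≤ (2:ℝ) ^ j := osc_sum hmo hjN hk
      -- combine everything
      have hCsum : (((dyadicBlock j k).filter
            (fun x => lam < |f x - finAvg f (dyadicBlock j k)|)).card : ℝ) ≤
          ∑ p ∈ M, (((dyadicBlock p.1 p.2).filter
            (fun x => lam - 4 < |f x - finAvg f (dyadicBlock p.1 p.2)|)).card : ℝ) := by
        have h1 := Finset.card_le_card hcover
        have h2 : (M.biUnion (fun p => (dyadicBlock p.1 p.2).filter
            (fun x => lam - 4 < |f x - finAvg f (dyadicBlock p.1 p.2)|))).card ≤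
            ∑ p ∈ M, ((dyadicBlock p.1 p.2).filter
            (fun x => lam - 4 < |f x - finAvg f (dyadicBlock p.1 p.2)|)).card :=
          Finset.card_biUnion_le
        have := le_trans h1 h2
        calc (((dyadicBlock j k).filter
            (fun x => lam < |f x - finAvg f (dyadicBlock j k)|)).card : ℝ)
            ≤ ((∑ p ∈ M, ((dyadicBlock p.1 p.2).filter
              (fun x => lam - 4 < |f x - finAvg f (dyadicBlock p.1 p.2)|)).card : ℕ) : ℝ) := by
              exact_mod_cast this
          _ = _ := by push_cast; rfl
      have hfinal : (2:ℝ) ^ (-(lam - 5) / 4) = (2:ℝ) ^ (-(lam - 1) / 4) * 2 := by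
        rw [show -(lam - 5) / 4 = -(lam - 1) / 4 + 1 by ring,
          Real.rpow_add two_pos, Real.rpow_one]
      calc (((dyadicBlock j k).filter
            (fun x => lam < |f x - finAvg f (dyadicBlock j k)|)).card : ℝ)
          ≤ ∑ p ∈ M, (((dyadicBlock p.1 p.2).filter
              (fun x => lam - 4 < |f x - finAvg f (dyadicBlock p.1 p.2)|)).card : ℝ) := hCsum
        _ ≤ ∑ p ∈ M, (2:ℝ) ^ (-(lam - 5) / 4) * 2 ^ p.1 := Finset.sum_le_sum hIH
        _ = (2:ℝ) ^ (-(lam - 1) / 4) * ∑ p ∈ M, (2:ℝ) ^ p.1 * 2 := by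
            rw [Finset.mul_sum]
            apply Finset.sum_congr rfl
            intro p _
            rw [hfinal]; ring
        _ ≤ (2:ℝ) ^ (-(lam - 1) / 4) * 2 ^ j :=
            mul_le_mul_of_nonneg_left hmass (le_of_lt hrpos)
end
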